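/- Example 2 (multicomponent (3+1)-dimensional system): let m, n ∈ ℕ with m > n ≥ 1, and let u₀, …, u_n and v₀, …, v_{m−1} be continuously differentiable real-valued functions of (x, y, z, t) ∈ ℝ⁴. Adopt the conventions u_i = 0 for i > n or i < 0, v_j = 0 for j > m or j < 0, and v_m = (m/n)·u_n. Define f(x,y,z,t,p) = p^{n+1} + Σ_{i=0}^{n} u_i·pⁱ and g(x,y,z,t,p) = p^{m+1} + Σ_{j=0}^{m} v_j·pʲ. Then ∂_t f − ∂_y g + {f, g}_L = 0 holds for all (x, y, z, t, p) ∈ ℝ⁵ (bracket in the variables (x, z, p)) if and only if for every k = 0, …, n+m and every (x, y, z, t): (u_k)_t − (v_k)_y + m·(u_{k−m−1})_z − n·(v_{k−n−1})_z + (n+1)·(v_{k−n})_x − (m+1)·(u_{k−m})_x + Σ_{i=max(0,k−m)}^{min(n,k)} ((k−i−1)·v_{k−i}·(u_i)_z − (i−1)·u_i·(v_{k−i})_z) − Σ_{i=max(0,k+1−m)}^{min(n,k+1)} ((k+1−i)·v_{k+1−i}·(u_i)_x − i·u_i·(v_{k+1−i})_x) = 0. -/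

import Mathlib

/-- Partial derivative of a function on ℝ⁵ in the `i`-th coordinate.
Coordinates: `0 ↦ x`, `1 ↦ y`, `2 ↦ z`, `3 ↦ t`, `4 ↦ p`. -/
noncomputable def pd5 (i : Fin 5) (h : (Fin 5 → ℝ) → ℝ) (r : Fin 5 → ℝ) : ℝ :=
  fderiv ℝ h r (Pi.single i 1)

/-- Partial derivative of a function on ℝ⁴ in the `i`-th coordinate.
Coordinates: `0 ↦ x`, `1 ↦ y`, `2 ↦ z`, `3 ↦ t`. -/
noncomputable def pd4 (i : Fin 4) (h : (Fin 4 → ℝ) → ℝ) (w : Fin 4 → ℝ) : ℝ :=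
  fderiv ℝ h w (Pi.single i 1)

/-- The contact (Lagrange) bracket in the variables `(x, z, p) = (r 0, r 2, r 4)`,
with `(y, t) = (r 1, r 3)` as parameters. -/
noncomputable def cbr5 (h₁ h₂ : (Fin 5 → ℝ) → ℝ) (r : Fin 5 → ℝ) : ℝ :=
  pd5 4 h₁ r * pd5 0 h₂ r - pd5 4 h₂ r * pd5 0 h₁ r
    - r 4 * (pd5 4 h₁ r * pd5 2 h₂ r - pd5 4 h₂ r * pd5 2 h₁ r)
    + h₁ r * pd5 2 h₂ r - h₂ r * pd5 2 h₁ r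

/-- Action of the contact vector field `X_h` in the variables `(x, z, p) = (r 0, r 2, r 4)`,
pointwise in the parameters `(y, t) = (r 1, r 3)`:
`X_h(φ) = hₚ φₓ + (p h_z − hₓ) φₚ + (h − p hₚ) φ_z`. -/
noncomputable def X5 (h φ : (Fin 5 → ℝ) → ℝ) (r : Fin 5 → ℝ) : ℝ :=
  pd5 4 h r * pd5 0 φ r + (r 4 * pd5 2 h r - pd5 0 h r) * pd5 4 φ r
    + (h r - r 4 * pd5 4 h r) * pd5 2 φ r

/-- Projection `(x,y,z,t,p) ↦ (x,y,z,t)`. -/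
def proj45 (r : Fin 5 → ℝ) : Fin 4 → ℝ := fun i => r i.castSucc

open Polynomial Finset

/-!
For fixed `(x, y, z, t)` the expression `f_t - g_y + {f, g}_L` is a polynomial in `p`, because
`f` and `g` are; the bracket is a combination of products of polynomials in `p`, so its
coefficients are Cauchy products of the coefficient sequences. Its `p^k` coefficient is the
`k`-th equation of the system for `k ≤ n + m`, the `p^(n+m+1)` coefficient is
`m (uₙ)_z - n (vₘ)_z = 0` because `vₘ = (m/n) uₙ`, and all higher coefficients vanish. A
polynomial vanishes on all of `ℝ` iff all its coefficients vanish.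
-/

def SupportedIn {M : Type*} [Zero M] (N : ℕ) (c : ℤ → M) : Prop :=
  ∀ i : ℤ, i < 0 ∨ (N : ℤ) < i → c i = 0

theorem SupportedIn.map {M M' : Type*} [Zero M] [Zero M'] {N : ℕ} {c : ℤ → M}
    (hc : SupportedIn N c) (φ : ℤ → M → M') (hφ : ∀ i, φ i 0 = 0) :
    SupportedIn N fun i => φ i (c i) := fun i hi => by simp only [hc i hi, hφ]

section CoeffPoly

variable {R : Type*} [Semiring R]

noncomputable def coeffPoly (N : ℕ) (c : ℤ → R) : R[X] :=
  ∑ i ∈ range (N + 1), C (c i) * X ^ i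

theorem coeff_coeffPoly {N : ℕ} {c : ℤ → R} (hc : SupportedIn N c) (k : ℕ) :
    (coeffPoly N c).coeff k = c k := by
  simp only [coeffPoly, finsetSum_coeff, coeff_C_mul_X_pow]
  rw [sum_ite_eq, ite_eq_left_iff, mem_range]
  exact fun hk => (hc k (Or.inr (by omega))).symm

theorem eval_coeffPoly (N : ℕ) (c : ℤ → R) (p : R) :
    (coeffPoly N c).eval p = ∑ i ∈ range (N + 1), c i * p ^ i := by
  simp [coeffPoly, eval_finsetSum]

theorem coeff_X_pow_mul_coeffPoly {N : ℕ} {c : ℤ → R} (hc : SupportedIn N c) (j k : ℕ) :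
    (X ^ j * coeffPoly N c).coeff k = c (k - j) := by
  rw [coeff_X_pow_mul']
  split_ifs with h
  · rw [coeff_coeffPoly hc, Nat.cast_sub h]
  · exact (hc _ (Or.inl (by omega))).symm

theorem coeff_X_mul_derivative (P : R[X]) (k : ℕ) :
    (X * derivative P).coeff k = k * P.coeff k := by
  cases k with
  | zero => simp
  | succ k => rw [coeff_X_mul, coeff_derivative, Nat.cast_comm]; push_cast; rfl

theorem sum_range_succ_eq_sum_Icc {M : Type*} [AddCommMonoid M] (k : ℕ) (φ : ℤ → M) :
    ∑ i ∈ range (k + 1), φ i = ∑ i ∈ Icc (0 : ℤ) k, φ i := by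
  rw [Int.Icc_eq_finset_map, sum_map]
  simp

theorem coeff_mul_eq_sum_Icc {N M : ℕ} {P Q : R[X]} {c d : ℤ → R}
    (hc : SupportedIn N c) (hd : SupportedIn M d)
    (hP : ∀ i : ℕ, P.coeff i = c i) (hQ : ∀ j : ℕ, Q.coeff j = d j) (k : ℕ) :
    (P * Q).coeff k = ∑ i ∈ Icc (max 0 ((k : ℤ) - M)) (min (N : ℤ) k), c i * d (k - i) := by
  have hsum : (P * Q).coeff k = ∑ i ∈ range (k + 1), c i * d (k - i) := by
    rw [coeff_mul, Nat.sum_antidiagonal_eq_sum_range_succ (fun i j => P.coeff i * Q.coeff j)]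
    refine sum_congr rfl fun i hi => ?_
    rw [hP, hQ, Nat.cast_sub (by simpa [Nat.lt_succ_iff] using hi)]
  rw [hsum, sum_range_succ_eq_sum_Icc k fun i => c i * d (k - i)]
  symm
  refine sum_subset (Icc_subset_Icc (le_max_left _ _) (min_le_right _ _)) fun i hi hi' => ?_
  simp only [mem_Icc, le_min_iff, max_le_iff, not_and_or, not_le] at hi hi'
  rcases hi' with (h | h) | h | h
  · omega
  · rw [hd _ (Or.inr (by omega)), mul_zero]
  · rw [hc _ (Or.inr h), zero_mul]
  · omega

end CoeffPoly

section PolyBracket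

variable {R : Type*} [CommRing R]

theorem coeff_X_mul_derivative_coeffPoly {N : ℕ} {c : ℤ → R} (hc : SupportedIn N c)
    (i : ℕ) :
    (X * derivative (coeffPoly N c)).coeff i = ((i : ℤ) : R) * c i := by
  rw [coeff_X_mul_derivative, coeff_coeffPoly hc, Int.cast_natCast]

-- `cbr5` at a fixed `(x, y, z, t)`: `∂ₚ` becomes `derivative`, and `Fx, Gx, Fz, Gz` stand for
-- the `x`- and `z`-partials of `F` and `G`.
noncomputable def polyBracket (F G Fx Gx Fz Gz : R[X]) : R[X] :=
  derivative F * Gx - derivative G * Fx - X * (derivative F * Gz - derivative G * Fz)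
    + F * Gz - G * Fz

theorem polyBracket_X_pow_add (n m : ℕ) (U V Ux Vx Uz Vz : R[X]) :
    polyBracket (X ^ (n + 1) + U) (X ^ (m + 1) + V) Ux Vx Uz Vz
      = polyBracket U V Ux Vx Uz Vz
        + C ((n : R) + 1) * (X ^ n * Vx) - C ((m : R) + 1) * (X ^ m * Ux)
        + C (m : R) * (X ^ (m + 1) * Uz) - C (n : R) * (X ^ (n + 1) * Vz) := by
  simp only [polyBracket, derivative_X_pow, map_add, map_natCast, map_one]
  push_cast
  ring

theorem coeff_polyBracket_coeffPoly {n m : ℕ} {c d cx dx cz dz : ℤ → R}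
    (hc : SupportedIn n c) (hd : SupportedIn m d) (hcx : SupportedIn n cx)
    (hdx : SupportedIn m dx) (hcz : SupportedIn n cz) (hdz : SupportedIn m dz) (k : ℕ) :
    (polyBracket (coeffPoly n c) (coeffPoly m d) (coeffPoly n cx) (coeffPoly m dx)
        (coeffPoly n cz) (coeffPoly m dz)).coeff k
      = ∑ i ∈ Icc (max 0 ((k : ℤ) - m)) (min (n : ℤ) k),
          ((((k : ℤ) - i - 1 : ℤ) : R) * d (k - i) * cz i
            - ((i - 1 : ℤ) : R) * c i * dz (k - i))
        - ∑ i ∈ Icc (max 0 ((k : ℤ) + 1 - m)) (min (n : ℤ) ((k : ℤ) + 1)),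
          ((((k : ℤ) + 1 - i : ℤ) : R) * d (k + 1 - i) * cx i
            - ((i : ℤ) : R) * c i * dx (k + 1 - i)) := by
  set U := coeffPoly n c
  set V := coeffPoly m d
  -- After multiplying by `X`, `U'` and `V'` only occur as `X U'` and `X V'`, with coefficients
  -- `i cᵢ` and `j dⱼ`; this is the index shift `k ↦ k + 1` in the `x`-sum.
  have hX :
      X * polyBracket U V (coeffPoly n cx) (coeffPoly m dx) (coeffPoly n cz) (coeffPoly m dz)
        = X * derivative U * coeffPoly m dx - coeffPoly n cx * (X * derivative V)
          + X * ((U - X * derivative U) * coeffPoly m dz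
            - coeffPoly n cz * (V - X * derivative V)) := by
    unfold polyBracket; ring
  have hXU := coeff_X_mul_derivative_coeffPoly hc
  have hXV := coeff_X_mul_derivative_coeffPoly hd
  have hU : ∀ i : ℕ, (U - X * derivative U).coeff i = (1 - ((i : ℤ) : R)) * c i := fun i => by
    rw [coeff_sub, hXU, coeff_coeffPoly hc]; ring
  have hV : ∀ j : ℕ, (V - X * derivative V).coeff j = (1 - ((j : ℤ) : R)) * d j := fun j => by
    rw [coeff_sub, hXV, coeff_coeffPoly hd]; ring
  have hcw := fun (f : ℤ → R) => hc.map (fun i x => f i * x) (fun _ => mul_zero _)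
  have hdw := fun (f : ℤ → R) => hd.map (fun i x => f i * x) (fun _ => mul_zero _)
  rw [← coeff_X_mul, hX, coeff_add, coeff_X_mul, coeff_sub, coeff_sub,
    coeff_mul_eq_sum_Icc (hcw _) hdx hXU (coeff_coeffPoly hdx),
    coeff_mul_eq_sum_Icc hcx (hdw _) (coeff_coeffPoly hcx) hXV,
    coeff_mul_eq_sum_Icc (hcw fun i => 1 - (i : R)) hdz hU (coeff_coeffPoly hdz),
    coeff_mul_eq_sum_Icc hcz (hdw fun j => 1 - (j : R)) (coeff_coeffPoly hcz) hV,
    ← sum_sub_distrib, ← sum_sub_distrib]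
  conv_rhs => rw [sub_eq_add_neg, ← sum_neg_distrib, add_comm]
  push_cast
  congr 1 <;> refine sum_congr rfl fun i _ => ?_ <;> ring

end PolyBracket

theorem pd4_zero (j : Fin 4) (w : Fin 4 → ℝ) : pd4 j 0 w = 0 := by
  simp [pd4]

theorem pd4_const_mul (j : Fin 4) (c : ℝ) (h : (Fin 4 → ℝ) → ℝ) (w : Fin 4 → ℝ) :
    pd4 j (fun w => c * h w) w = c * pd4 j h w := by
  change fderiv ℝ (c • h) w _ = _
  rw [fderiv_const_smul_field]
  rfl

theorem SupportedIn.eval {N : ℕ} {a : ℤ → (Fin 4 → ℝ) → ℝ} (ha : SupportedIn N a)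
    (w : Fin 4 → ℝ) : SupportedIn N fun i => a i w :=
  ha.map (fun _ h => h w) fun _ => rfl

theorem SupportedIn.pd4 {N : ℕ} {a : ℤ → (Fin 4 → ℝ) → ℝ} (ha : SupportedIn N a)
    (j : Fin 4) (w : Fin 4 → ℝ) : SupportedIn N fun i => pd4 j (a i) w :=
  ha.map (fun _ h => _root_.pd4 j h w) fun _ => pd4_zero j w

noncomputable def monicPoly (N : ℕ) (a : ℤ → (Fin 4 → ℝ) → ℝ) (w : Fin 4 → ℝ) : ℝ[X] :=
  X ^ (N + 1) + coeffPoly N fun i => a i w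

noncomputable def partialPoly (j : Fin 4) (N : ℕ) (a : ℤ → (Fin 4 → ℝ) → ℝ)
    (w : Fin 4 → ℝ) : ℝ[X] :=
  coeffPoly N fun i => pd4 j (a i) w

noncomputable def curvaturePoly (m n : ℕ) (u v : ℤ → (Fin 4 → ℝ) → ℝ) (w : Fin 4 → ℝ) :
    ℝ[X] :=
  partialPoly 3 n u w - partialPoly 1 m v w
    + polyBracket (monicPoly n u w) (monicPoly m v w) (partialPoly 0 n u w)
        (partialPoly 0 m v w) (partialPoly 2 n u w) (partialPoly 2 m v w)

noncomputable def zeroCurvatureCoeff (m n : ℕ) (u v : ℤ → (Fin 4 → ℝ) → ℝ) (k : ℕ)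
    (w : Fin 4 → ℝ) : ℝ :=
  pd4 3 (u (k : ℤ)) w - pd4 1 (v (k : ℤ)) w
    + (m : ℝ) * pd4 2 (u ((k : ℤ) - (m : ℤ) - 1)) w
    - (n : ℝ) * pd4 2 (v ((k : ℤ) - (n : ℤ) - 1)) w
    + ((n : ℝ) + 1) * pd4 0 (v ((k : ℤ) - (n : ℤ))) w
    - ((m : ℝ) + 1) * pd4 0 (u ((k : ℤ) - (m : ℤ))) w
    + ∑ i ∈ Finset.Icc (max 0 ((k : ℤ) - (m : ℤ))) (min (n : ℤ) (k : ℤ)),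
        ((((k : ℤ) - i - 1 : ℤ) : ℝ) * v ((k : ℤ) - i) w * pd4 2 (u i) w
          - (((i - 1 : ℤ) : ℝ)) * u i w * pd4 2 (v ((k : ℤ) - i)) w)
    - ∑ i ∈ Finset.Icc (max 0 ((k : ℤ) + 1 - (m : ℤ))) (min (n : ℤ) ((k : ℤ) + 1)),
        ((((k : ℤ) + 1 - i : ℤ) : ℝ) * v ((k : ℤ) + 1 - i) w * pd4 0 (u i) w
          - ((i : ℤ) : ℝ) * u i w * pd4 0 (v ((k : ℤ) + 1 - i)) w)

theorem coeff_curvaturePoly {m n : ℕ} {u v : ℤ → (Fin 4 → ℝ) → ℝ}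
    (hu : SupportedIn n u) (hv : SupportedIn m v) (w : Fin 4 → ℝ) (k : ℕ) :
    (curvaturePoly m n u v w).coeff k = zeroCurvatureCoeff m n u v k w := by
  rw [curvaturePoly, monicPoly, monicPoly, polyBracket_X_pow_add]
  simp only [partialPoly, coeff_add, coeff_sub, coeff_C_mul,
    coeff_coeffPoly (hu.pd4 _ w), coeff_coeffPoly (hv.pd4 _ w),
    coeff_X_pow_mul_coeffPoly (hu.pd4 _ w), coeff_X_pow_mul_coeffPoly (hv.pd4 _ w),
    coeff_polyBracket_coeffPoly (hu.eval w) (hv.eval w) (hu.pd4 0 w) (hv.pd4 0 w)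
      (hu.pd4 2 w) (hv.pd4 2 w)]
  rw [zeroCurvatureCoeff]
  push_cast
  simp only [← sub_sub]
  ring

theorem zeroCurvatureCoeff_eq_zero_of_lt {m n : ℕ} {u v : ℤ → (Fin 4 → ℝ) → ℝ} (hn : n ≠ 0)
    (hu : SupportedIn n u) (hv : SupportedIn m v)
    (hvm : v m = fun w => ((m : ℝ) / n) * u n w) {k : ℕ} (hk : n + m < k) (w : Fin 4 → ℝ) :
    zeroCurvatureCoeff m n u v k w = 0 := by
  -- The top coefficient `p^(n+m+1)` is `m (uₙ)_z - n (vₘ)_z`, killed by the normalisation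
  -- of `vₘ`.
  have htop :
      (m : ℝ) * pd4 2 (u ((k : ℤ) - m - 1)) w = n * pd4 2 (v ((k : ℤ) - n - 1)) w := by
    rcases Nat.succ_le_of_lt hk |>.eq_or_lt with rfl | hk
    · rw [show ((n + m + 1 : ℕ) : ℤ) - m - 1 = n by push_cast; ring,
        show ((n + m + 1 : ℕ) : ℤ) - n - 1 = m by push_cast; ring, hvm, pd4_const_mul]
      field_simp
    · rw [hu _ (Or.inr (by omega)), hv _ (Or.inr (by omega)), pd4_zero, mul_zero, mul_zero]
  rw [zeroCurvatureCoeff, hu k (Or.inr (by omega)), hv k (Or.inr (by omega)),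
    hv (k - n) (Or.inr (by omega)), hu (k - m) (Or.inr (by omega)),
    Icc_eq_empty_of_lt (by omega), Icc_eq_empty_of_lt (by omega)]
  simp only [pd4_zero, sum_empty]
  linarith

noncomputable def monicFun (N : ℕ) (a : ℤ → (Fin 4 → ℝ) → ℝ) (r : Fin 5 → ℝ) : ℝ :=
  r 4 ^ (N + 1) + ∑ i ∈ range (N + 1), a i (proj45 r) * r 4 ^ i

theorem monicFun_eq_eval (N : ℕ) (a : ℤ → (Fin 4 → ℝ) → ℝ) (r : Fin 5 → ℝ) :
    monicFun N a r = (monicPoly N a (proj45 r)).eval (r 4) := by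
  simp [monicFun, monicPoly, eval_coeffPoly]

noncomputable def proj45L : (Fin 5 → ℝ) →L[ℝ] (Fin 4 → ℝ) :=
  ContinuousLinearMap.pi fun i => ContinuousLinearMap.proj i.castSucc

theorem proj45L_single_castSucc (j : Fin 4) :
    proj45L (Pi.single j.castSucc 1) = Pi.single j 1 := by
  ext i
  simp [proj45L, Pi.single_apply, Fin.castSucc_inj]

theorem proj45L_single_four : proj45L (Pi.single 4 1) = 0 := by
  ext i
  simp [proj45L, Fin.ext_iff, i.isLt.ne]

theorem hasFDerivAt_monicFun (N : ℕ) {a : ℤ → (Fin 4 → ℝ) → ℝ} {r : Fin 5 → ℝ}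
    (ha : ∀ i, DifferentiableAt ℝ (a i) (proj45 r)) :
    HasFDerivAt (monicFun N a)
      ((((N + 1 : ℕ) : ℝ) * r 4 ^ N) • ContinuousLinearMap.proj (4 : Fin 5)
        + ∑ i ∈ range (N + 1),
            (a i (proj45 r) • ((i * r 4 ^ (i - 1)) • ContinuousLinearMap.proj (4 : Fin 5))
              + r 4 ^ i • (fderiv ℝ (a i) (proj45 r)).comp proj45L)) r := by
  have hpow (k : ℕ) : HasFDerivAt (fun r : Fin 5 → ℝ => r 4 ^ k)
      ((k * r 4 ^ (k - 1)) • ContinuousLinearMap.proj (4 : Fin 5)) r :=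
    (hasDerivAt_pow k (r 4)).comp_hasFDerivAt (f := fun r : Fin 5 → ℝ => r 4) r
      (hasFDerivAt_apply (𝕜 := ℝ) 4 r)
  exact (hpow _).add (HasFDerivAt.fun_sum fun i _ =>
    ((ha i).hasFDerivAt.comp r proj45L.hasFDerivAt).mul (hpow i))

theorem pd5_castSucc_monicFun (N : ℕ) {a : ℤ → (Fin 4 → ℝ) → ℝ} {r : Fin 5 → ℝ}
    (ha : ∀ i, DifferentiableAt ℝ (a i) (proj45 r)) (j : Fin 4) :
    pd5 j.castSucc (monicFun N a) r = (partialPoly j N a (proj45 r)).eval (r 4) := by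
  rw [pd5, (hasFDerivAt_monicFun N ha).fderiv, partialPoly, eval_coeffPoly]
  simp [proj45L_single_castSucc, pd4, Fin.ext_iff, j.isLt.ne', mul_comm]

theorem pd5_four_monicFun (N : ℕ) {a : ℤ → (Fin 4 → ℝ) → ℝ} {r : Fin 5 → ℝ}
    (ha : ∀ i, DifferentiableAt ℝ (a i) (proj45 r)) :
    pd5 4 (monicFun N a) r = (derivative (monicPoly N a (proj45 r))).eval (r 4) := by
  rw [pd5, (hasFDerivAt_monicFun N ha).fderiv, monicPoly, coeffPoly]
  simp [proj45L_single_four, eval_finsetSum, derivative_X_pow]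

theorem curvature_eq_eval_curvaturePoly {m n : ℕ} {u v : ℤ → (Fin 4 → ℝ) → ℝ}
    (hu : ∀ i, Differentiable ℝ (u i)) (hv : ∀ j, Differentiable ℝ (v j)) (r : Fin 5 → ℝ) :
    pd5 3 (monicFun n u) r - pd5 1 (monicFun m v) r + cbr5 (monicFun n u) (monicFun m v) r
      = (curvaturePoly m n u v (proj45 r)).eval (r 4) := by
  have hu' i := (hu i).differentiableAt (x := proj45 r)
  have hv' j := (hv j).differentiableAt (x := proj45 r)
  rw [cbr5, show (0 : Fin 5) = (0 : Fin 4).castSucc from rfl,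
    show (1 : Fin 5) = (1 : Fin 4).castSucc from rfl,
    show (2 : Fin 5) = (2 : Fin 4).castSucc from rfl,
    show (3 : Fin 5) = (3 : Fin 4).castSucc from rfl]
  simp only [pd5_castSucc_monicFun _ hu', pd5_castSucc_monicFun _ hv', pd5_four_monicFun _ hu',
    pd5_four_monicFun _ hv', monicFun_eq_eval, curvaturePoly, polyBracket, eval_add, eval_sub,
    eval_mul, eval_X]

theorem forall_eval_proj45_eq_zero_iff (P : (Fin 4 → ℝ) → ℝ[X]) :
    (∀ r : Fin 5 → ℝ, (P (proj45 r)).eval (r 4) = 0) ↔ ∀ w, P w = 0 := by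
  refine ⟨fun h w => Polynomial.funext fun p => ?_, fun h r => by rw [h, eval_zero]⟩
  have hwp := h (Fin.snoc w p)
  rwa [show proj45 (Fin.snoc w p) = w from Fin.init_snoc _ _,
    show (Fin.snoc w p : Fin 5 → ℝ) 4 = p from Fin.snoc_last _ _, ← eval_zero (x := p)] at hwp

theorem example2_zero_curvature_iff_system_general (m n : ℕ) (hn : 1 ≤ n)
    (u v : ℤ → (Fin 4 → ℝ) → ℝ)
    (hu : ∀ i : ℤ, ContDiff ℝ 1 (u i)) (hv : ∀ j : ℤ, ContDiff ℝ 1 (v j))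
    (hu0 : ∀ i : ℤ, i < 0 ∨ (n : ℤ) < i → u i = 0)
    (hv0 : ∀ j : ℤ, j < 0 ∨ (m : ℤ) < j → v j = 0)
    (hvm : v (m : ℤ) = fun w => ((m : ℝ) / (n : ℝ)) * u (n : ℤ) w)
    (f g : (Fin 5 → ℝ) → ℝ)
    (hf : f = fun r =>
      (r 4) ^ (n + 1) + ∑ i ∈ Finset.range (n + 1), u (i : ℤ) (proj45 r) * (r 4) ^ i)
    (hg : g = fun r =>
      (r 4) ^ (m + 1) + ∑ j ∈ Finset.range (m + 1), v (j : ℤ) (proj45 r) * (r 4) ^ j) :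
    (∀ r : Fin 5 → ℝ, pd5 3 f r - pd5 1 g r + cbr5 f g r = 0) ↔
    (∀ k : ℕ, k ≤ n + m → ∀ w : Fin 4 → ℝ,
      pd4 3 (u (k : ℤ)) w - pd4 1 (v (k : ℤ)) w
        + (m : ℝ) * pd4 2 (u ((k : ℤ) - (m : ℤ) - 1)) w
        - (n : ℝ) * pd4 2 (v ((k : ℤ) - (n : ℤ) - 1)) w
        + ((n : ℝ) + 1) * pd4 0 (v ((k : ℤ) - (n : ℤ))) w
        - ((m : ℝ) + 1) * pd4 0 (u ((k : ℤ) - (m : ℤ))) w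
        + ∑ i ∈ Finset.Icc (max 0 ((k : ℤ) - (m : ℤ))) (min (n : ℤ) (k : ℤ)),
            ((((k : ℤ) - i - 1 : ℤ) : ℝ) * v ((k : ℤ) - i) w * pd4 2 (u i) w
              - (((i - 1 : ℤ) : ℝ)) * u i w * pd4 2 (v ((k : ℤ) - i)) w)
        - ∑ i ∈ Finset.Icc (max 0 ((k : ℤ) + 1 - (m : ℤ))) (min (n : ℤ) ((k : ℤ) + 1)),
            ((((k : ℤ) + 1 - i : ℤ) : ℝ) * v ((k : ℤ) + 1 - i) w * pd4 0 (u i) w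
              - ((i : ℤ) : ℝ) * u i w * pd4 0 (v ((k : ℤ) + 1 - i)) w)
        = 0) := by
  obtain rfl : f = monicFun n u := hf
  obtain rfl : g = monicFun m v := hg
  simp only [curvature_eq_eval_curvaturePoly (fun i => (hu i).differentiable one_ne_zero)
      (fun j => (hv j).differentiable one_ne_zero), forall_eval_proj45_eq_zero_iff,
    Polynomial.ext_iff, coeff_curvaturePoly hu0 hv0, coeff_zero]
  refine ⟨fun h k _ w => h w k, fun h w k => ?_⟩
  rcases le_or_gt k (n + m) with hk | hk
  · exact h k hk w
  · exact zeroCurvatureCoeff_eq_zero_of_lt (by omega) hu0 hv0 hvm hk w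

/-- Example 2, multicomponent (3+1)-dimensional system: let `m > n ≥ 1`,
let `u i` (for `0 ≤ i ≤ n`) and `v j` (for `0 ≤ j ≤ m−1`) be C¹ functions on ℝ⁴
(indexed over ℤ with the conventions `u i = 0` for `i < 0` or `i > n`, `v j = 0` for
`j < 0` or `j > m`, and `v m = (m/n) u n`), and set
`f = p^{n+1} + Σ_{i=0}^{n} uᵢ pⁱ`, `g = p^{m+1} + Σ_{j=0}^{m} vⱼ pʲ`.
Then `∂_t f − ∂_y g + {f,g}_L = 0` holds for all `(x,y,z,t,p) ∈ ℝ⁵` iff for all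
`k = 0, …, n+m` and all `(x,y,z,t)` the system (gndkp) holds. -/
theorem example2_zero_curvature_iff_system (m n : ℕ) (hmn : m > n) (hn : 1 ≤ n)
    (u v : ℤ → (Fin 4 → ℝ) → ℝ)
    (hu : ∀ i : ℤ, ContDiff ℝ 1 (u i)) (hv : ∀ j : ℤ, ContDiff ℝ 1 (v j))
    (hu0 : ∀ i : ℤ, i < 0 ∨ (n : ℤ) < i → u i = 0)
    (hv0 : ∀ j : ℤ, j < 0 ∨ (m : ℤ) < j → v j = 0)
    (hvm : v (m : ℤ) = fun w => ((m : ℝ) / (n : ℝ)) * u (n : ℤ) w)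
    (f g : (Fin 5 → ℝ) → ℝ)
    (hf : f = fun r =>
      (r 4) ^ (n + 1) + ∑ i ∈ Finset.range (n + 1), u (i : ℤ) (proj45 r) * (r 4) ^ i)
    (hg : g = fun r =>
      (r 4) ^ (m + 1) + ∑ j ∈ Finset.range (m + 1), v (j : ℤ) (proj45 r) * (r 4) ^ j) :
    (∀ r : Fin 5 → ℝ, pd5 3 f r - pd5 1 g r + cbr5 f g r = 0) ↔
    (∀ k : ℕ, k ≤ n + m → ∀ w : Fin 4 → ℝ,
      pd4 3 (u (k : ℤ)) w - pd4 1 (v (k : ℤ)) w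
        + (m : ℝ) * pd4 2 (u ((k : ℤ) - (m : ℤ) - 1)) w
        - (n : ℝ) * pd4 2 (v ((k : ℤ) - (n : ℤ) - 1)) w
        + ((n : ℝ) + 1) * pd4 0 (v ((k : ℤ) - (n : ℤ))) w
        - ((m : ℝ) + 1) * pd4 0 (u ((k : ℤ) - (m : ℤ))) w
        + ∑ i ∈ Finset.Icc (max 0 ((k : ℤ) - (m : ℤ))) (min (n : ℤ) (k : ℤ)),
            ((((k : ℤ) - i - 1 : ℤ) : ℝ) * v ((k : ℤ) - i) w * pd4 2 (u i) w
              - (((i - 1 : ℤ) : ℝ)) * u i w * pd4 2 (v ((k : ℤ) - i)) w)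
        - ∑ i ∈ Finset.Icc (max 0 ((k : ℤ) + 1 - (m : ℤ))) (min (n : ℤ) ((k : ℤ) + 1)),
            ((((k : ℤ) + 1 - i : ℤ) : ℝ) * v ((k : ℤ) + 1 - i) w * pd4 0 (u i) w
              - ((i : ℤ) : ℝ) * u i w * pd4 0 (v ((k : ℤ) + 1 - i)) w)
        = 0) :=
  example2_zero_curvature_iff_system_general m n hn u v hu hv hu0 hv0 hvm f g hf hg
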